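/- Let t be a positive integer and let 0 ≤ s < t be an integer such that s is not congruent to j(j+1)/2 modulo t for any integer j with 0 ≤ j < 2t. Then for all n ≥ 0, the coefficient of q^{tn+s} in (q;q)_∞^3/(q^t;q^t)_∞^3 is zero. -/

import Mathlib

/-
Jacobi's identity is proved in the finite form
  `(q;q)_M ^ 2 = ∑_{s ≤ M} (-1)^s (2s+1) q^{s(s+1)/2} [2M+1, M+1+s]_q`.
Expand `Φ(y) = ∏_{k ≤ 2M} (q^M - q^k y) = ∑_j φ_j y^j` by the q-binomial theorem: the `φ_j` are
antisymmetric under `j ↦ 2M+1-j`, so `Φ'(1) = ∑_j j φ_j` folds onto the upper half, while in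
the product only the factor `k = M` vanishes at `y = 1`, giving `Φ'(1)` as a multiple of
`(q;q)_M ^ 2`.
Since `(q;q)_M [2M+1, M+1+s]_q ≡ 1 mod q^{M-s+1}`, this yields
`(q;q)_∞ ^ 3 ≡ ∑_{s ≤ M} (-1)^s (2s+1) q^{s(s+1)/2} mod q^{M+1}`.

The power series `(q^t;q^t)_∞^{-3}` is supported on multiples of `t`, so in the coefficient of
`q^{tn+s}` every term pairs it with a coefficient of `(q;q)_∞ ^ 3` at an exponent `≡ s mod t`.
As `j(j+1)/2 mod t` depends only on `j mod 2t`, the hypothesis makes that exponent non-triangular.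
-/

open PowerSeries

/-- `(q^r; q^a)_∞ = ∏_{k≥0} (1 - q^{r+ak})` as a formal power series (defined
coefficientwise via truncated products; for `r ≥ 1` factors of index `> n` do not
affect the coefficient of `q^n`). -/
noncomputable def qpoch (r a : ℕ) : PowerSeries ℝ :=
  PowerSeries.mk fun n =>
    PowerSeries.coeff (R := ℝ) n (∏ k ∈ Finset.range (n + 1), (1 - PowerSeries.X ^ (r + a * k)))

/-- `(q^a; q^a)_∞ = ∏_{k≥1} (1 - q^{ak})`. -/
noncomputable def E (a : ℕ) : PowerSeries ℝ := qpoch a a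

/-- `c_t^{(m)}(n)`: the coefficient of `q^n` in `(q;q)_∞^m / (q^t;q^t)_∞^m`. -/
noncomputable def borweinC (t m n : ℕ) : ℝ :=
  PowerSeries.coeff (R := ℝ) n ((E 1) ^ m * ((E t) ^ m)⁻¹)

open Finset

namespace Nat

theorem two_mul_choose_two_add_self (n : ℕ) : 2 * n.choose 2 + n = n * n := by
  induction n with
  | zero => rfl
  | succ n ih => rw [choose_succ_succ', choose_one_right]; linarith

theorem choose_two_modEq_of_modEq_two_mul {t a b : ℕ} (h : a ≡ b [MOD 2 * t]) :
    (a + 1).choose 2 ≡ (b + 1).choose 2 [MOD t] := by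
  wlog hab : b ≤ a generalizing a b
  · exact (this h.symm (by omega)).symm
  obtain ⟨k, hk⟩ := (Nat.modEq_iff_dvd' hab).1 h.symm
  have hsum : (a + 1).choose 2 = (b + 1).choose 2 + t * (k * (2 * b + 1 + 2 * t * k)) := by
    have ha := two_mul_choose_two_add_self (a + 1)
    have hb := two_mul_choose_two_add_self (b + 1)
    have : a = b + 2 * t * k := by omega
    subst this
    nlinarith
  rw [hsum]
  exact ((Nat.modEq_iff_dvd' le_self_add).2 (by simp)).symm

end Nat

section CommRing

variable {A : Type*} [CommRing A]

def qPochhammer (q : A) (n : ℕ) : A := ∏ k ∈ range n, (1 - q ^ (k + 1))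

@[simp] theorem qPochhammer_zero (q : A) : qPochhammer q 0 = 1 := rfl

theorem qPochhammer_succ (q : A) (n : ℕ) :
    qPochhammer q (n + 1) = qPochhammer q n * (1 - q ^ (n + 1)) :=
  prod_range_succ _ _

theorem pow_succ_dvd_prod_one_sub_pow_sub_one (q : A) {F : Finset ℕ} {a : ℕ}
    (hF : ∀ k ∈ F, a ≤ k) : q ^ (a + 1) ∣ ∏ k ∈ F, (1 - q ^ (k + 1)) - 1 := by
  induction F using Finset.induction_on with
  | empty => simp
  | insert i F hi ih =>
    rw [prod_insert hi]
    have hq : q ^ (a + 1) ∣ q ^ (i + 1) := pow_dvd_pow q (by simp [hF i (mem_insert_self i F)])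
    have := dvd_sub (ih fun k hk => hF k (mem_insert_of_mem hk))
      (hq.mul_right (∏ k ∈ F, (1 - q ^ (k + 1))))
    convert this using 1
    ring

theorem pow_succ_dvd_qPochhammer_sub (q : A) {a b : ℕ} (h : a ≤ b) :
    q ^ (a + 1) ∣ qPochhammer q b - qPochhammer q a := by
  have := (pow_succ_dvd_prod_one_sub_pow_sub_one q (F := Ico a b) fun k hk =>
    (mem_Ico.1 hk).1).mul_left (qPochhammer q a)
  rwa [mul_sub, mul_one, qPochhammer, prod_range_mul_prod_Ico _ h] at this

-- `m - j` truncates only when `m < j`, where `qBinomial q m j = 0` anyway.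
def qBinomial (q : A) : ℕ → ℕ → A
  | _, 0 => 1
  | 0, _ + 1 => 0
  | m + 1, j + 1 => qBinomial q m (j + 1) + q ^ (m - j) * qBinomial q m j

@[simp] theorem qBinomial_zero_right (q : A) (m : ℕ) : qBinomial q m 0 = 1 := by
  cases m <;> rfl

theorem qBinomial_succ_succ (q : A) (m j : ℕ) :
    qBinomial q (m + 1) (j + 1) = qBinomial q m (j + 1) + q ^ (m - j) * qBinomial q m j := rfl

theorem qBinomial_eq_zero_of_lt (q : A) {m j : ℕ} (h : m < j) : qBinomial q m j = 0 := by
  induction m generalizing j with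
  | zero => obtain ⟨j, rfl⟩ := Nat.exists_eq_succ_of_ne_zero (by omega : j ≠ 0); rfl
  | succ m ih =>
    obtain ⟨j, rfl⟩ := Nat.exists_eq_succ_of_ne_zero (by omega : j ≠ 0)
    rw [qBinomial_succ_succ, ih (by omega), ih (by omega), mul_zero, add_zero]

@[simp] theorem qBinomial_self (q : A) (m : ℕ) : qBinomial q m m = 1 := by
  induction m with
  | zero => rfl
  | succ m ih => rw [qBinomial_succ_succ, qBinomial_eq_zero_of_lt q m.lt_succ_self, ih]; simp

theorem qBinomial_mul_qPochhammer_mul_qPochhammer (q : A) {m j : ℕ} (h : j ≤ m) :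
    qBinomial q m j * (qPochhammer q j * qPochhammer q (m - j)) = qPochhammer q m := by
  induction m generalizing j with
  | zero =>
    obtain rfl : j = 0 := by omega
    simp
  | succ m ih =>
    obtain _ | j := j
    · simp
    obtain rfl | hj := eq_or_lt_of_le (Nat.le_of_succ_le_succ h)
    · simp
    obtain ⟨d, rfl⟩ := Nat.exists_eq_add_of_lt hj
    have h₁ := ih (j := j + 1) (by omega)
    have h₂ := ih (j := j) (by omega)
    rw [show j + d + 1 - (j + 1) = d by omega] at h₁
    rw [show j + d + 1 - j = d + 1 by omega, qPochhammer_succ] at h₂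
    rw [qBinomial_succ_succ, show j + d + 1 + 1 - (j + 1) = d + 1 by omega,
      show j + d + 1 - j = d + 1 by omega, qPochhammer_succ q d, qPochhammer_succ q (j + d + 1)]
    rw [qPochhammer_succ q j] at h₁ ⊢
    linear_combination (1 - q ^ (d + 1)) * h₁ + q ^ (d + 1) * (1 - q ^ (j + 1)) * h₂

theorem Polynomial.coeff_sum_range_C_mul_X_pow {f : ℕ → A} {N : ℕ}
    (hf : ∀ n, N ≤ n → f n = 0) (n : ℕ) :
    (∑ j ∈ range N, Polynomial.C (f j) * Polynomial.X ^ j).coeff n = f n := by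
  simp only [Polynomial.finsetSum_coeff, Polynomial.coeff_C_mul_X_pow, sum_ite_eq, mem_range]
  split_ifs with h
  · rfl
  · exact (hf n (not_lt.1 h)).symm

def qBinomialTerm (q c : A) (m j : ℕ) : A :=
  (-1) ^ j * q ^ j.choose 2 * c ^ (m - j) * qBinomial q m j

theorem qBinomialTerm_eq_zero_of_lt (q c : A) {m j : ℕ} (h : m < j) :
    qBinomialTerm q c m j = 0 := by
  rw [qBinomialTerm, qBinomial_eq_zero_of_lt q h, mul_zero]

theorem qBinomialTerm_succ_succ (q c : A) (m j : ℕ) :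
    qBinomialTerm q c (m + 1) (j + 1) =
      c * qBinomialTerm q c m (j + 1) - q ^ m * qBinomialTerm q c m j := by
  simp only [qBinomialTerm]
  rw [qBinomial_succ_succ, Nat.choose_succ_succ', Nat.choose_one_right]
  obtain hj | rfl | hj := lt_trichotomy j m
  · obtain ⟨d, rfl⟩ := Nat.exists_eq_add_of_lt hj
    rw [show j + d + 1 + 1 - (j + 1) = d + 1 by omega, show j + d + 1 - (j + 1) = d by omega,
      show j + d + 1 - j = d + 1 by omega]
    ring
  · rw [qBinomial_eq_zero_of_lt q j.lt_succ_self, qBinomial_self, Nat.sub_self, Nat.sub_self]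
    ring
  · simp [qBinomial_eq_zero_of_lt q hj, qBinomial_eq_zero_of_lt q (Nat.lt_succ_of_lt hj)]

theorem prod_C_sub_C_pow_mul_X (q c : A) (m : ℕ) :
    ∏ k ∈ range m, (Polynomial.C c - Polynomial.C (q ^ k) * Polynomial.X) =
      ∑ j ∈ range (m + 1), Polynomial.C (qBinomialTerm q c m j) * Polynomial.X ^ j := by
  induction m with
  | zero => simp [qBinomialTerm]
  | succ m ih =>
    ext n
    have hvanish : ∀ m n, m + 1 ≤ n → qBinomialTerm q c m n = 0 := fun m n h =>
      qBinomialTerm_eq_zero_of_lt q c h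
    rw [prod_range_succ, ih, mul_sub, Polynomial.coeff_sub, Polynomial.coeff_mul_C,
      ← mul_assoc, Polynomial.coeff_sum_range_C_mul_X_pow (hvanish (m + 1)),
      Polynomial.coeff_sum_range_C_mul_X_pow (hvanish m)]
    obtain _ | n := n
    · simp [qBinomialTerm, pow_succ]
    rw [Polynomial.coeff_mul_X, Polynomial.coeff_mul_C,
      Polynomial.coeff_sum_range_C_mul_X_pow (hvanish m), qBinomialTerm_succ_succ]
    ring

theorem prod_range_pow_sub_pow (q : A) (M : ℕ) :
    ∏ k ∈ range M, (q ^ M - q ^ k) = (-1) ^ M * q ^ M.choose 2 * qPochhammer q M := by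
  have hfactor : ∀ k ∈ range M, q ^ M - q ^ k = (-1) * q ^ k * (1 - q ^ (M - 1 - k + 1)) := by
    intro k hk
    rw [show M - 1 - k + 1 = M - k by have := mem_range.1 hk; omega]
    linear_combination -pow_mul_pow_sub q (mem_range.1 hk).le
  rw [prod_congr rfl hfactor, prod_mul_distrib, prod_mul_distrib, prod_const, card_range,
    prod_pow_eq_pow_sum, sum_range_id, ← Nat.choose_two_right, qPochhammer,
    prod_range_reflect (fun k => 1 - q ^ (k + 1))]

theorem prod_range_pow_sub_pow_add (q : A) (M : ℕ) :
    ∏ k ∈ range M, (q ^ M - q ^ (M + (k + 1))) = q ^ (M * M) * qPochhammer q M := by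
  calc ∏ k ∈ range M, (q ^ M - q ^ (M + (k + 1)))
      = ∏ k ∈ range M, (q ^ M * (1 - q ^ (k + 1))) := prod_congr rfl fun k _ => by ring
    _ = q ^ (M * M) * qPochhammer q M := by
        rw [prod_mul_distrib, prod_const, card_range, ← pow_mul, qPochhammer]

theorem eval_one_derivative_prod_C_pow_sub (q : A) (M : ℕ) :
    (Polynomial.derivative (∏ k ∈ range (2 * M + 1),
        (Polynomial.C (q ^ M) - Polynomial.C (q ^ k) * Polynomial.X))).eval 1 =
      (-1) ^ (M + 1) * q ^ (M + M.choose 2 + M * M) * qPochhammer q M ^ 2 := by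
  rw [show 2 * M + 1 = M + (M + 1) by ring, prod_range_add, prod_range_succ', add_zero,
    show ∀ a b c : Polynomial A, a * (b * c) = c * (a * b) from fun _ _ _ => by ring,
    Polynomial.derivative_mul]
  simp only [Polynomial.eval_add, Polynomial.eval_mul, Polynomial.eval_sub, Polynomial.eval_C,
    Polynomial.eval_X, Polynomial.eval_prod, Polynomial.derivative_sub, Polynomial.derivative_C,
    Polynomial.derivative_C_mul_X, Polynomial.eval_zero, mul_one, sub_self, zero_mul, add_zero,
    prod_range_pow_sub_pow,
    prod_range_pow_sub_pow_add]
  ring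

theorem sum_range_natCast_mul_of_antisymm {f : ℕ → A} {M : ℕ}
    (hf : ∀ j ≤ 2 * M + 1, f (2 * M + 1 - j) = -f j) :
    ∑ j ∈ range (2 * M + 2), (j : A) * f j =
      ∑ s ∈ range (M + 1), (2 * s + 1 : A) * f (M + 1 + s) := by
  have hlow : ∑ j ∈ range (M + 1), (j : A) * f j =
      ∑ s ∈ range (M + 1), -((M - s : ℕ) : A) * f (M + 1 + s) := by
    rw [← sum_range_reflect]
    refine sum_congr rfl fun s hs => ?_
    have hs := mem_range.1 hs
    have hfs := hf (M + 1 + s) (by omega)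
    rw [show 2 * M + 1 - (M + 1 + s) = M - s by omega] at hfs
    rw [show M + 1 - 1 - s = M - s by omega, hfs]
    ring
  rw [show 2 * M + 2 = (M + 1) + (M + 1) by ring, sum_range_add, hlow, ← sum_add_distrib]
  refine sum_congr rfl fun s hs => ?_
  rw [Nat.cast_sub (by have := mem_range.1 hs; omega)]
  push_cast
  ring

theorem qBinomialTerm_middle (q : A) {M s : ℕ} (hs : s ≤ M) :
    qBinomialTerm q (q ^ M) (2 * M + 1) (M + 1 + s) =
      (-1) ^ (M + 1) * q ^ (M + M.choose 2 + M * M) *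
        ((-1) ^ s * q ^ (s + 1).choose 2 * qBinomial q (2 * M + 1) (M + 1 + s)) := by
  have hexp :
      (M + 1 + s).choose 2 + M * (M - s) = M + M.choose 2 + M * M + (s + 1).choose 2 := by
    obtain ⟨d, rfl⟩ := Nat.exists_eq_add_of_le hs
    rw [Nat.add_sub_cancel_left]
    nlinarith [Nat.two_mul_choose_two_add_self (s + d + 1 + s),
      Nat.two_mul_choose_two_add_self (s + d), Nat.two_mul_choose_two_add_self (s + 1)]
  have hq_exp : q ^ (M + 1 + s).choose 2 * q ^ (M * (M - s)) =
      q ^ (M + M.choose 2 + M * M) * q ^ (s + 1).choose 2 := by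
    rw [← pow_add, ← pow_add, hexp]
  simp only [qBinomialTerm, show 2 * M + 1 - (M + 1 + s) = M - s by omega, ← pow_mul]
  linear_combination (-1) ^ (M + 1 + s) * qBinomial q (2 * M + 1) (M + 1 + s) * hq_exp

end CommRing

section IsDomain

variable {A : Type*} [CommRing A] [IsDomain A] {q : A}

theorem qPochhammer_ne_zero (hq : ∀ n, q ^ (n + 1) ≠ 1) (n : ℕ) : qPochhammer q n ≠ 0 :=
  prod_ne_zero_iff.2 fun k _ => sub_ne_zero.2 (hq k).symm

theorem qBinomial_symm (hq : ∀ n, q ^ (n + 1) ≠ 1) {m j : ℕ} (h : j ≤ m) :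
    qBinomial q m j = qBinomial q m (m - j) := by
  have h₁ := qBinomial_mul_qPochhammer_mul_qPochhammer q h
  have h₂ := qBinomial_mul_qPochhammer_mul_qPochhammer q (Nat.sub_le m j)
  rw [Nat.sub_sub_self h, mul_comm (qPochhammer q (m - j))] at h₂
  exact mul_right_cancel₀ (mul_ne_zero (qPochhammer_ne_zero hq _) (qPochhammer_ne_zero hq _))
    (h₁.trans h₂.symm)

theorem qPochhammer_mul_qBinomial (hq : ∀ n, q ^ (n + 1) ≠ 1) {M s : ℕ} (hs : s ≤ M) :
    qPochhammer q M * qBinomial q (2 * M + 1) (M + 1 + s) =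
      ∏ k ∈ Ico (M - s) M ∪ Ico (M + 1 + s) (2 * M + 1), (1 - q ^ (k + 1)) := by
  have hsplit : ∀ {a b}, a ≤ b →
      qPochhammer q b = qPochhammer q a * ∏ k ∈ Ico a b, (1 - q ^ (k + 1)) := fun h =>
    (prod_range_mul_prod_Ico _ h).symm
  have hbinom := qBinomial_mul_qPochhammer_mul_qPochhammer q (m := 2 * M + 1) (j := M + 1 + s)
    (by omega)
  rw [show 2 * M + 1 - (M + 1 + s) = M - s by omega] at hbinom
  rw [prod_union (disjoint_left.2 fun k hk hk' => by simp only [mem_Ico] at hk hk'; omega)]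
  refine mul_right_cancel₀ (mul_ne_zero (qPochhammer_ne_zero hq (M + 1 + s))
    (qPochhammer_ne_zero hq (M - s))) ?_
  calc qPochhammer q M * qBinomial q (2 * M + 1) (M + 1 + s) *
        (qPochhammer q (M + 1 + s) * qPochhammer q (M - s))
      = qPochhammer q M * qPochhammer q (2 * M + 1) := by rw [← hbinom]; ring
    _ = _ := by
      rw [hsplit (show M - s ≤ M by omega), hsplit (show M + 1 + s ≤ 2 * M + 1 by omega)]
      ring

theorem qBinomialTerm_antisymm (hq : ∀ n, q ^ (n + 1) ≠ 1) {M j : ℕ} (hj : j ≤ 2 * M + 1) :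
    qBinomialTerm q (q ^ M) (2 * M + 1) (2 * M + 1 - j) =
      -qBinomialTerm q (q ^ M) (2 * M + 1) j := by
  obtain ⟨i, hi⟩ := Nat.exists_eq_add_of_le hj
  have hexp : i.choose 2 + M * j = j.choose 2 + M * i := by
    nlinarith [Nat.two_mul_choose_two_add_self i, Nat.two_mul_choose_two_add_self j]
  have hq_exp : q ^ i.choose 2 * q ^ (M * j) = q ^ j.choose 2 * q ^ (M * i) := by
    rw [← pow_add, ← pow_add, hexp]
  have hsign : (-1 : A) ^ i * (-1) ^ j = -1 := by
    rw [← pow_add, add_comm, ← hi, pow_succ, pow_mul]; simp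
  have hsq : (-1 : A) ^ j * (-1) ^ j = 1 := by rw [← mul_pow]; simp
  simp only [qBinomialTerm, hi, Nat.add_sub_cancel_left, Nat.add_sub_cancel, ← pow_mul]
  rw [qBinomial_symm hq (show j ≤ j + i by omega), Nat.add_sub_cancel_left]
  linear_combination (-1) ^ i * qBinomial q (j + i) i * hq_exp +
    q ^ j.choose 2 * q ^ (M * i) * qBinomial q (j + i) i * ((-1) ^ j * hsign - (-1) ^ i * hsq)

theorem qPochhammer_sq_eq_sum (hq₀ : q ≠ 0) (hq : ∀ n, q ^ (n + 1) ≠ 1) (M : ℕ) :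
    qPochhammer q M ^ 2 = ∑ s ∈ range (M + 1),
      (-1) ^ s * (2 * s + 1) * q ^ (s + 1).choose 2 * qBinomial q (2 * M + 1) (M + 1 + s) := by
  have hderiv := eval_one_derivative_prod_C_pow_sub q M
  rw [prod_C_sub_C_pow_mul_X, Polynomial.derivative_sum, Polynomial.eval_finsetSum,
    sum_congr rfl fun j _ => by
      rw [Polynomial.derivative_C_mul_X_pow, Polynomial.eval_mul, Polynomial.eval_C,
        Polynomial.eval_pow, Polynomial.eval_X, one_pow, mul_one, mul_comm],
    sum_range_natCast_mul_of_antisymm fun j hj => qBinomialTerm_antisymm hq hj] at hderiv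
  have hK : (-1 : A) ^ (M + 1) * q ^ (M + M.choose 2 + M * M) ≠ 0 := by simp [hq₀]
  refine mul_left_cancel₀ hK (hderiv.symm.trans ?_)
  rw [mul_sum]
  refine sum_congr rfl fun s hs => ?_
  rw [qBinomialTerm_middle q (Nat.lt_succ_iff.1 (mem_range.1 hs))]
  ring

theorem pow_succ_dvd_qPochhammer_pow_three_sub (hq₀ : q ≠ 0) (hq : ∀ n, q ^ (n + 1) ≠ 1)
    (M : ℕ) : q ^ (M + 1) ∣ qPochhammer q M ^ 3 -
      ∑ s ∈ range (M + 1), (-1) ^ s * (2 * s + 1) * q ^ (s + 1).choose 2 := by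
  rw [pow_succ' (qPochhammer q M) 2, qPochhammer_sq_eq_sum hq₀ hq, mul_sum, ← sum_sub_distrib]
  refine dvd_sum fun s hs => ?_
  have hs := mem_range.1 hs
  have htail := pow_succ_dvd_prod_one_sub_pow_sub_one q
    (F := Ico (M - s) M ∪ Ico (M + 1 + s) (2 * M + 1)) (a := M - s)
    fun k hk => by simp only [mem_union, mem_Ico] at hk; omega
  rw [← qPochhammer_mul_qBinomial hq (by omega)] at htail
  have hexp : M + 1 ≤ (s + 1).choose 2 + (M - s + 1) := by
    rw [Nat.choose_succ_succ', Nat.choose_one_right]; omega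
  calc q ^ (M + 1) ∣ q ^ (s + 1).choose 2 * q ^ (M - s + 1) := by
        rw [← pow_add]; exact pow_dvd_pow q hexp
    _ ∣ (-1) ^ s * (2 * s + 1) * q ^ (s + 1).choose 2 *
          (qPochhammer q M * qBinomial q (2 * M + 1) (M + 1 + s) - 1) :=
        mul_dvd_mul (dvd_mul_left _ _) htail
    _ = _ := by ring

end IsDomain

namespace PowerSeries

def multiplesSubring (R : Type*) [CommRing R] (t : ℕ) : Subring R⟦X⟧ where
  carrier := {f | ∀ n, ¬ t ∣ n → coeff n f = 0}
  mul_mem' {f g} hf hg n hn := by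
    refine (coeff_mul n f g).trans (sum_eq_zero fun p hp => ?_)
    rw [HasAntidiagonal.mem_antidiagonal] at hp
    by_cases h₁ : t ∣ p.1
    · rw [hg p.2 fun h₂ => hn (hp ▸ dvd_add h₁ h₂), mul_zero]
    · rw [hf p.1 h₁, zero_mul]
  one_mem' n hn := by rw [coeff_one, if_neg (by rintro rfl; exact hn (dvd_zero t))]
  add_mem' {f g} hf hg n hn := by rw [map_add, hf n hn, hg n hn, add_zero]
  zero_mem' n _ := map_zero _
  neg_mem' {f} hf n hn := by rw [map_neg, hf n hn, neg_zero]

theorem mem_multiplesSubring {R : Type*} [CommRing R] {t : ℕ} {f : R⟦X⟧} :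
    f ∈ multiplesSubring R t ↔ ∀ n, ¬ t ∣ n → coeff n f = 0 := Iff.rfl

theorem X_pow_mem_multiplesSubring (R : Type*) [CommRing R] (t : ℕ) :
    (X : R⟦X⟧) ^ t ∈ multiplesSubring R t := fun n hn => by
  rw [coeff_X_pow, if_neg (by rintro rfl; exact hn dvd_rfl)]

theorem inv_mem_multiplesSubring {k : Type*} [Field k] {t : ℕ} {f : k⟦X⟧}
    (hf : f ∈ multiplesSubring k t) : f⁻¹ ∈ multiplesSubring k t := by
  intro n hn
  induction n using Nat.strong_induction_on with
  | _ n ih =>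
    rw [coeff_inv, if_neg (by rintro rfl; exact hn (dvd_zero t)), sum_eq_zero, mul_zero]
    intro p hp
    rw [HasAntidiagonal.mem_antidiagonal] at hp
    split_ifs with hlt
    · by_cases h₂ : t ∣ p.2
      · rw [hf p.1 fun h₁ => hn (hp ▸ dvd_add h₁ h₂), zero_mul]
      · rw [ih p.2 hlt h₂, mul_zero]
    · rfl

end PowerSeries

open PowerSeries

theorem E_mem_multiplesSubring (t : ℕ) : E t ∈ multiplesSubring ℝ t := by
  intro n hn
  rw [E, qpoch, coeff_mk]
  refine mem_multiplesSubring.1 (prod_mem fun k _ => ?_) n hn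
  rw [show t + t * k = t * (k + 1) by ring, pow_mul]
  exact sub_mem (one_mem _) (pow_mem (X_pow_mem_multiplesSubring ℝ t) _)

theorem coeff_E_one (n : ℕ) : coeff n (E 1) = coeff n (qPochhammer (X : ℝ⟦X⟧) (n + 1)) := by
  rw [E, qpoch, coeff_mk, qPochhammer]
  exact congrArg _ (prod_congr rfl fun k _ => by rw [add_comm, one_mul])

theorem X_pow_succ_dvd_E_one_sub (N : ℕ) :
    (X : ℝ⟦X⟧) ^ (N + 1) ∣ E 1 - qPochhammer X N := by
  have hstable : ∀ {m b}, m ≤ b →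
      coeff m (qPochhammer (X : ℝ⟦X⟧) b) = coeff m (qPochhammer X m) :=
    fun h => sub_eq_zero.1 <| by
      rw [← map_sub]; exact X_pow_dvd_iff.1 (pow_succ_dvd_qPochhammer_sub X h) _ (lt_add_one _)
  refine X_pow_dvd_iff.2 fun m hm => ?_
  rw [map_sub, coeff_E_one, hstable (Nat.le_succ m), hstable (Nat.lt_succ_iff.1 hm), sub_self]

theorem X_pow_succ_dvd_E_one_pow_three_sub (N : ℕ) :
    (X : ℝ⟦X⟧) ^ (N + 1) ∣ E 1 ^ 3 -
      ∑ s ∈ range (N + 1), (-1) ^ s * (2 * s + 1) * (X : ℝ⟦X⟧) ^ (s + 1).choose 2 := by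
  have hX : ∀ n, (X : ℝ⟦X⟧) ^ (n + 1) ≠ 1 := fun n h => by
    simpa using congrArg constantCoeff h
  have := dvd_add ((X_pow_succ_dvd_E_one_sub N).trans (sub_dvd_pow_sub_pow _ _ 3))
    (pow_succ_dvd_qPochhammer_pow_three_sub X_ne_zero hX N)
  rwa [sub_add_sub_cancel] at this

theorem coeff_E_one_pow_three_eq_zero {N : ℕ} (hN : ∀ s, (s + 1).choose 2 ≠ N) :
    coeff N (E 1 ^ 3) = 0 := by
  have := X_pow_dvd_iff.1 (X_pow_succ_dvd_E_one_pow_three_sub N) N (lt_add_one N)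
  rw [map_sub, sub_eq_zero] at this
  rw [this, map_sum]
  refine sum_eq_zero fun s _ => ?_
  rw [show ((-1) ^ s * (2 * s + 1) : ℝ⟦X⟧) = C ((-1) ^ s * (2 * s + 1) : ℝ) by
      simp only [map_mul, map_pow, map_neg, map_one, map_add, map_natCast, map_ofNat],
    coeff_C_mul_X_pow, if_neg (hN s).symm]

theorem stmt4_general (t : ℕ) (s : ℕ) (hs : s < t)
    (h : ∀ j : ℕ, j < 2 * t → ¬ (s ≡ j * (j + 1) / 2 [MOD t])) (n : ℕ) :
    borweinC t 3 (t * n + s) = 0 := by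
  have hinv : ((E t) ^ 3)⁻¹ ∈ multiplesSubring ℝ t :=
    inv_mem_multiplesSubring (pow_mem (E_mem_multiplesSubring t) 3)
  rw [borweinC, coeff_mul]
  refine sum_eq_zero fun p hp => ?_
  rw [HasAntidiagonal.mem_antidiagonal] at hp
  by_cases hdvd : t ∣ p.2
  · refine mul_eq_zero_of_left (coeff_E_one_pow_three_eq_zero fun r hr => ?_) _
    have hmod : s ≡ (r % (2 * t) + 1).choose 2 [MOD t] :=
      calc s ≡ t * n + s [MOD t] := (Nat.mul_add_mod_self_left t n s).symm
        _ = p.1 + p.2 := hp.symm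
        _ ≡ p.1 [MOD t] :=
          ((Nat.modEq_iff_dvd' le_self_add).2 (by rwa [Nat.add_sub_cancel_left])).symm
        _ = (r + 1).choose 2 := hr.symm
        _ ≡ (r % (2 * t) + 1).choose 2 [MOD t] :=
          Nat.choose_two_modEq_of_modEq_two_mul (Nat.mod_modEq r (2 * t)).symm
    refine h (r % (2 * t)) (Nat.mod_lt _ (by omega)) ?_
    rwa [Nat.choose_two_right, Nat.add_sub_cancel, mul_comm] at hmod
  · exact mul_eq_zero_of_right _ (hinv p.2 hdvd)

theorem stmt4 (t : ℕ) (ht : 0 < t) (s : ℕ) (hs : s < t)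
    (h : ∀ j : ℕ, j < 2 * t → ¬ (s ≡ j * (j + 1) / 2 [MOD t])) (n : ℕ) :
    borweinC t 3 (t * n + s) = 0 :=
  stmt4_general t s hs h n
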